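/- arXiv:1505.06983 — 2 statements merged into one kernel-verified Lean document; each statement's English description precedes it below -/
import Mathlib

section
/- Let m ≥ 1 and p be integers and d = gcd(p, m), and let f(x), g(x) ∈ ℤ[x]. Then: (i) the image of the linear map ℤ^m → ℤ^m given by 1_m + X_m^p equals the image of 1_m + X_m^d, and the image of 1_m − X_m^p equals the image of 1_m − X_m^d; (ii) Coker [f(X_m) 1_m − X_m^p] ≅ Coker f(X_d); (iii) Coker [f(X_m) g(X_m) 1_m − X_m^p] ≅ Coker [f(X_d) g(X_d)]. -/
/-!
Write `q = p mod m`, so that `X_m^p = X_m^q` and `gcd(q, m) = d`. Since `X_m^m = 1` only exponents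
modulo `m` matter, and modulo `m` each of `q`, `d` is an odd multiple of the other. As
`1 - y ∣ 1 - y^e` for all `e` and `1 + y ∣ 1 + y^e` for odd `e`, the matrices `1 ± X_m^q` and
`1 ± X_m^d` divide each other, which gives (i).

For (ii) and (iii), folding the coordinates modulo `d` is a surjection `P : ℤ^m → ℤ^d` with
`P X_m = X_d P` whose kernel is the image of `1 - X_m^d`, i.e. of `1 - X_m^q`. Dividing out the
block `1 - X_m^p` therefore amounts to pushing the remaining columns forward along `P`, which turns
`f(X_m)` into `f(X_d)`.
-/

open Matrix Polynomial

/-- The `m × m` permutation matrix over `ℤ` of the cyclic permutation `(1,2,…,m)`: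
its `(i,j)` entry is `1` iff `i ≡ j + 1 (mod m)`. -/
def cycMat (m : ℕ) : Matrix (Fin m) (Fin m) ℤ :=
  Matrix.of fun i j => if ((j : ℕ) + 1) % m = (i : ℕ) then 1 else 0

/-- `X_m ^ p` for an integer exponent `p`, well defined since `X_m ^ m = 1`. -/
def cycMatZPow (m : ℕ) (p : ℤ) : Matrix (Fin m) (Fin m) ℤ :=
  cycMat m ^ (p % (m : ℤ)).toNat

/-- The cokernel `ℤ^m / A·ℤ^n` of an integer matrix. -/
abbrev coker {m n : Type} [Fintype m] [Fintype n] (A : Matrix m n ℤ) :=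
  (m → ℤ) ⧸ LinearMap.range A.mulVecLin


/-- `s_p(A) = 1 - A + A² - ⋯ + (-1)^(p-1) A^(p-1)` for a square integer matrix `A`. -/
def sMat {n : Type} [Fintype n] [DecidableEq n] (p : ℕ) (A : Matrix n n ℤ) :
    Matrix n n ℤ :=
  ∑ i ∈ Finset.range p, ((-1 : ℤ) ^ i) • A ^ i

open Fin.NatCast

section funMatrix

variable {R ι κ ν : Type*} [Semiring R] [DecidableEq κ]

def funMatrix (σ : ι → κ) : Matrix κ ι R :=
  Matrix.of fun k i => if σ i = k then 1 else 0

lemma funMatrix_mulVec_single [Fintype ι] [DecidableEq ι] (σ : ι → κ) (i : ι) (c : R) :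
    funMatrix σ *ᵥ Pi.single i c = Pi.single (σ i) c := by
  ext k
  simp [funMatrix, Matrix.mulVec_single, Pi.single_apply, eq_comm]

lemma funMatrix_mul [Fintype κ] [DecidableEq ν] (τ : κ → ν) (σ : ι → κ) :
    (funMatrix τ : Matrix ν κ R) * (funMatrix σ : Matrix κ ι R) = funMatrix (τ ∘ σ) := by
  ext l i
  simp [funMatrix, Matrix.mul_apply]

lemma funMatrix_id : (funMatrix (fun k => k) : Matrix κ κ R) = 1 := by
  ext k i
  simp [funMatrix, Matrix.one_apply, eq_comm]

end funMatrix

section cycMat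

variable {m : ℕ} [NeZero m]

lemma cycMat_eq_funMatrix : cycMat m = funMatrix (· + 1 : Fin m → Fin m) := by
  ext i j
  simp only [cycMat, funMatrix, Matrix.of_apply, Fin.ext_iff, Fin.val_add, Fin.val_one',
    Nat.add_mod_mod]

lemma cycMat_pow (a : ℕ) : cycMat m ^ a = funMatrix (· + (a : Fin m)) := by
  induction a with
  | zero => simp [funMatrix_id]
  | succ a ih =>
    rw [pow_succ, ih, cycMat_eq_funMatrix, funMatrix_mul]
    congr 1
    funext i
    simp only [Function.comp_apply, Nat.cast_succ]
    ac_rfl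

lemma cycMat_pow_card : cycMat m ^ m = 1 := by
  simp [cycMat_pow, funMatrix_id]

lemma cycMat_pow_mulVec_single (a : ℕ) (i : Fin m) (c : ℤ) :
    cycMat m ^ a *ᵥ Pi.single i c = Pi.single (i + a) c := by
  rw [cycMat_pow, funMatrix_mulVec_single]

end cycMat

lemma Nat.exists_odd_modEq {x n : ℕ} (h : Odd x ∨ Odd n) :
    ∃ e, Odd e ∧ e ≡ x [MOD n] := by
  by_cases hx : Odd x
  · exact ⟨x, hx, rfl⟩
  · exact ⟨x + n, (Nat.not_odd_iff_even.mp hx).add_odd (h.resolve_left hx),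
      Nat.add_modEq_right⟩

lemma Nat.exists_odd_mul_modEq_of_coprime {a b n : ℕ} [NeZero n] (ha : a.Coprime n)
    (hb : b.Coprime n) : ∃ e, Odd e ∧ b * e ≡ a [MOD n] := by
  set e₀ := ((b : ZMod n)⁻¹ * a).val
  have he₀ : b * e₀ ≡ a [MOD n] := by
    rw [← ZMod.natCast_eq_natCast_iff, Nat.cast_mul, ZMod.natCast_zmod_val, ← mul_assoc,
      ZMod.coe_mul_inv_eq_one b hb, one_mul]
  -- if `n` is even then `a` is odd, and so is `b * e₀ ≡ a [MOD 2]`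
  have hparity : Odd e₀ ∨ Odd n := by
    by_contra! h
    obtain ⟨he₀_even, hn_even⟩ := h
    rw [Nat.not_odd_iff_even] at he₀_even hn_even
    have ha2 : 2 ∣ a := (he₀.dvd_iff hn_even.two_dvd).mp (he₀_even.mul_left b).two_dvd
    exact Nat.not_coprime_of_dvd_of_dvd one_lt_two ha2 hn_even.two_dvd ha
  obtain ⟨e, he, hee₀⟩ := Nat.exists_odd_modEq hparity
  exact ⟨e, he, (hee₀.mul_left b).trans he₀⟩

lemma Nat.exists_odd_mul_modEq_of_gcd_eq {a b m : ℕ} (hm : 0 < m) (h : a.gcd m = b.gcd m) :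
    ∃ e, Odd e ∧ b * e ≡ a [MOD m] := by
  obtain ⟨a', m', ha', hadef, hmdef⟩ := Nat.exists_coprime a m
  obtain ⟨b', m'', hb', hbdef, hmdef'⟩ := Nat.exists_coprime b m
  rw [← h] at hbdef hmdef'
  set d := a.gcd m
  have hd : 0 < d := Nat.gcd_pos_of_pos_right a hm
  obtain rfl : m'' = m' := Nat.eq_of_mul_eq_mul_right hd (hmdef'.symm.trans hmdef)
  have : NeZero m'' := ⟨by rintro rfl; omega⟩
  obtain ⟨e, he, hmod⟩ := exists_odd_mul_modEq_of_coprime ha' hb'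
  have key := hmod.mul_right' d
  rw [mul_right_comm, ← hbdef, ← hadef, ← hmdef] at key
  exact ⟨e, he, key⟩

section dvd

lemma Odd.one_add_dvd_one_add_pow {R : Type*} [Ring R] {e : ℕ} (he : Odd e) (x : R) :
    1 + x ∣ 1 + x ^ e := by
  simpa [he.neg_pow] using one_sub_dvd_one_sub_pow (-x) e

variable {R : Type*} [Ring R] {x : R} {m a b : ℕ}

lemma one_sub_pow_dvd_of_gcd_eq (hm : 0 < m) (hx : x ^ m = 1) (h : a.gcd m = b.gcd m) :
    1 - x ^ b ∣ 1 - x ^ a := by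
  obtain ⟨e, -, he⟩ := Nat.exists_odd_mul_modEq_of_gcd_eq hm h
  rw [pow_eq_pow_mod a hx, ← he, ← pow_eq_pow_mod _ hx, pow_mul]
  exact one_sub_dvd_one_sub_pow _ e

lemma one_add_pow_dvd_of_gcd_eq (hm : 0 < m) (hx : x ^ m = 1) (h : a.gcd m = b.gcd m) :
    1 + x ^ b ∣ 1 + x ^ a := by
  obtain ⟨e, he_odd, he⟩ := Nat.exists_odd_mul_modEq_of_gcd_eq hm h
  rw [pow_eq_pow_mod a hx, ← he, ← pow_eq_pow_mod _ hx, pow_mul]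
  exact he_odd.one_add_dvd_one_add_pow _

end dvd

namespace Matrix

variable {R ι κ α β : Type*} [CommRing R] [Fintype ι]

lemma range_mulVecLin_le_of_dvd {A B : Matrix ι ι R} (h : A ∣ B) :
    LinearMap.range B.mulVecLin ≤ LinearMap.range A.mulVecLin := by
  obtain ⟨C, rfl⟩ := h
  rw [mulVecLin_mul]
  exact LinearMap.range_comp_le_range _ _

lemma range_mulVecLin_eq_of_dvd_of_dvd {A B : Matrix ι ι R} (hAB : A ∣ B) (hBA : B ∣ A) :
    LinearMap.range A.mulVecLin = LinearMap.range B.mulVecLin :=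
  le_antisymm (range_mulVecLin_le_of_dvd hBA) (range_mulVecLin_le_of_dvd hAB)

lemma range_mulVecLin_fromCols [Fintype α] [Fintype β] (A : Matrix κ α R) (B : Matrix κ β R) :
    LinearMap.range (fromCols A B).mulVecLin
      = LinearMap.range A.mulVecLin ⊔ LinearMap.range B.mulVecLin := by
  have hcol : (fromCols A B).col = Sum.elim A.col B.col := by
    ext (j | j) i <;> rfl
  rw [range_mulVecLin, range_mulVecLin, range_mulVecLin, hcol, Set.Sum.elim_range,
    Submodule.span_union]

lemma map_range_mulVecLin_of_mul_eq [Fintype α] [Fintype β] {P : Matrix κ ι R}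
    {A : Matrix ι α R} {B : Matrix κ β R} {P' : Matrix β α R} (h : P * A = B * P')
    (hP' : Function.Surjective P'.mulVecLin) :
    (LinearMap.range A.mulVecLin).map P.mulVecLin = LinearMap.range B.mulVecLin := by
  rw [← LinearMap.range_comp, ← mulVecLin_mul, h, mulVecLin_mul, LinearMap.range_comp,
    LinearMap.range_eq_top.mpr hP', Submodule.map_top]

variable [DecidableEq ι] [Fintype κ] [DecidableEq κ] {P : Matrix κ ι R} {A : Matrix ι ι R}
  {B : Matrix κ κ R}

lemma mul_pow_eq_pow_mul (h : P * A = B * P) (n : ℕ) : P * A ^ n = B ^ n * P := by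
  induction n with
  | zero => simp
  | succ n ih =>
    rw [pow_succ, ← Matrix.mul_assoc, ih, Matrix.mul_assoc, h, ← Matrix.mul_assoc, ← pow_succ]

lemma mul_aeval_eq_aeval_mul (h : P * A = B * P) (f : R[X]) : P * aeval A f = aeval B f * P := by
  induction f using Polynomial.induction_on' with
  | add f g hf hg => rw [map_add, map_add, Matrix.mul_add, Matrix.add_mul, hf, hg]
  | monomial n c =>
    simp only [aeval_monomial, Algebra.algebraMap_eq_smul_one, smul_mul_assoc, one_mul,
      Matrix.mul_smul, Matrix.smul_mul, mul_pow_eq_pow_mul h]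

end Matrix

section fold

variable {m d : ℕ} [NeZero d]

def foldMat (m d : ℕ) [NeZero d] : Matrix (Fin d) (Fin m) ℤ :=
  funMatrix fun i : Fin m => ((i : ℕ) : Fin d)

lemma foldMat_mul_cycMat [NeZero m] (hdm : d ∣ m) :
    foldMat m d * cycMat m = cycMat d * foldMat m d := by
  rw [cycMat_eq_funMatrix, cycMat_eq_funMatrix, foldMat, funMatrix_mul, funMatrix_mul]
  congr 1
  funext i
  ext
  simp [Fin.val_add, Fin.val_natCast, Nat.mod_mod_of_dvd _ hdm]

lemma foldMat_mul_castLE (hdm : d ≤ m) :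
    foldMat m d * funMatrix (R := ℤ) (Fin.castLE hdm) = 1 := by
  rw [foldMat, funMatrix_mul]
  convert funMatrix_id
  simp

lemma foldMat_mulVecLin_surjective (hdm : d ≤ m) : Function.Surjective (foldMat m d).mulVecLin :=
  fun v => ⟨funMatrix (Fin.castLE hdm) *ᵥ v, by
    rw [mulVecLin_apply, mulVec_mulVec, foldMat_mul_castLE, one_mulVec]⟩

variable [NeZero m]

lemma single_sub_single_mem_range_one_sub_cycMat_pow (hdm : d ∣ m) (i : Fin m) :
    Pi.single i 1 - Pi.single (Fin.castLE (Nat.le_of_dvd (NeZero.pos m) hdm) ((i : ℕ) : Fin d)) 1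
      ∈ LinearMap.range (1 - cycMat m ^ d).mulVecLin := by
  set r := Fin.castLE (Nat.le_of_dvd (NeZero.pos m) hdm) ((i : ℕ) : Fin d)
  have hri : r + ((d * (i / d) : ℕ) : Fin m) = i := by
    have hdiv : d * (i / d) < m := (Nat.mul_div_le i d).trans_lt i.isLt
    ext
    simp only [r, Fin.val_add, Fin.val_natCast, Fin.val_castLE]
    rw [Nat.mod_eq_of_lt hdiv, Nat.mod_add_div, Nat.mod_eq_of_lt i.isLt]
  have hmem : Pi.single i 1 - Pi.single r 1
      ∈ LinearMap.range (1 - cycMat m ^ (d * (i / d))).mulVecLin :=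
    ⟨Pi.single r (-1), by
      rw [mulVecLin_apply, sub_mulVec, one_mulVec, cycMat_pow_mulVec_single, hri,
        Pi.single_neg, Pi.single_neg, neg_sub_neg]⟩
  refine range_mulVecLin_le_of_dvd ?_ hmem
  rw [pow_mul]
  exact one_sub_dvd_one_sub_pow _ _

lemma ker_foldMat (hdm : d ∣ m) :
    LinearMap.ker (foldMat m d).mulVecLin = LinearMap.range (1 - cycMat m ^ d).mulVecLin := by
  refine le_antisymm ?_ ?_
  · set Q := funMatrix (R := ℤ) (Fin.castLE (Nat.le_of_dvd (NeZero.pos m) hdm))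
    have hcols : LinearMap.range (1 - Q * foldMat m d).mulVecLin
        ≤ LinearMap.range (1 - cycMat m ^ d).mulVecLin := by
      rw [range_mulVecLin, Submodule.span_le, Set.range_subset_iff]
      intro i
      rw [← mulVec_single_one, sub_mulVec, one_mulVec, foldMat, funMatrix_mul,
        funMatrix_mulVec_single]
      exact single_sub_single_mem_range_one_sub_cycMat_pow hdm i
    intro v hv
    have hPv : foldMat m d *ᵥ v = 0 := hv
    have hv' : v = (1 - Q * foldMat m d) *ᵥ v := by
      rw [sub_mulVec, one_mulVec, ← mulVec_mulVec, hPv, mulVec_zero, sub_zero]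
    exact hv' ▸ hcols ⟨v, rfl⟩
  · rw [LinearMap.range_le_ker_iff, ← mulVecLin_mul, Matrix.mul_sub, Matrix.mul_one,
      mul_pow_eq_pow_mul (foldMat_mul_cycMat hdm), cycMat_pow_card, Matrix.one_mul, sub_self,
      mulVecLin_zero]

lemma map_foldMat_range_aeval_cycMat (hdm : d ∣ m) (f : ℤ[X]) :
    (LinearMap.range (aeval (cycMat m) f).mulVecLin).map (foldMat m d).mulVecLin
      = LinearMap.range (aeval (cycMat d) f).mulVecLin :=
  map_range_mulVecLin_of_mul_eq (mul_aeval_eq_aeval_mul (foldMat_mul_cycMat hdm) f)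
    (foldMat_mulVecLin_surjective (Nat.le_of_dvd (NeZero.pos m) hdm))

end fold

noncomputable def LinearMap.quotientSupKerEquivOfSurjective {R M N : Type*} [Ring R]
    [AddCommGroup M] [Module R M] [AddCommGroup N] [Module R N] (π : M →ₗ[R] N)
    (hπ : Function.Surjective π) (S : Submodule R M) :
    (M ⧸ S ⊔ LinearMap.ker π) ≃ₗ[R] N ⧸ S.map π :=
  (Submodule.quotEquivOfEq _ _
    (by rw [LinearMap.ker_comp, Submodule.ker_mkQ, Submodule.comap_map_eq])).trans
    (((S.map π).mkQ ∘ₗ π).quotKerEquivOfSurjective ((Submodule.mkQ_surjective _).comp hπ))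

noncomputable def cokerFromColsEquiv {ι κ α β γ : Type} [Fintype ι] [Fintype α] [Fintype β]
    [Fintype κ] [Fintype γ] (π : (ι → ℤ) →ₗ[ℤ] κ → ℤ)
    (hπ : Function.Surjective π)
    {A : Matrix ι α ℤ} {K : Matrix ι β ℤ} {B : Matrix κ γ ℤ}
    (hK : LinearMap.range K.mulVecLin = LinearMap.ker π)
    (hAB : (LinearMap.range A.mulVecLin).map π = LinearMap.range B.mulVecLin) :
    coker (fromCols A K) ≃ₗ[ℤ] coker B :=
  (Submodule.quotEquivOfEq _ _ (by rw [range_mulVecLin_fromCols, hK])).trans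
    ((π.quotientSupKerEquivOfSurjective hπ _).trans (Submodule.quotEquivOfEq _ _ hAB))

theorem stmt_6 (m : ℕ) (hm : 1 ≤ m) (p : ℤ) (d : ℕ) (hd : d = Int.gcd p m)
    (f g : Polynomial ℤ) :
    LinearMap.range (1 + cycMatZPow m p).mulVecLin
      = LinearMap.range (1 + cycMat m ^ d).mulVecLin ∧
    LinearMap.range (1 - cycMatZPow m p).mulVecLin
      = LinearMap.range (1 - cycMat m ^ d).mulVecLin ∧
    Nonempty (coker (Matrix.fromCols (aeval (cycMat m) f) (1 - cycMatZPow m p)) ≃+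
      coker (aeval (cycMat d) f)) ∧
    Nonempty (coker (Matrix.fromCols
        (Matrix.fromCols (aeval (cycMat m) f) (aeval (cycMat m) g))
        (1 - cycMatZPow m p)) ≃+
      coker (Matrix.fromCols (aeval (cycMat d) f) (aeval (cycMat d) g))) := by
  have : NeZero m := ⟨by omega⟩
  set q := (p % (m : ℤ)).toNat
  have hqd : q.gcd m = d := by
    rw [hd, ← Int.gcd_emod, ← Int.gcd_natCast_natCast,
      Int.toNat_of_nonneg (Int.emod_nonneg _ (by omega))]
  have hdm : d ∣ m := hqd ▸ Nat.gcd_dvd_right q m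
  have : NeZero d := ⟨(hqd ▸ Nat.gcd_pos_of_pos_right q hm).ne'⟩
  have hgcd : q.gcd m = d.gcd m := by rw [hqd, Nat.gcd_eq_left hdm]
  have hsub : LinearMap.range (1 - cycMatZPow m p).mulVecLin
      = LinearMap.range (1 - cycMat m ^ d).mulVecLin :=
    range_mulVecLin_eq_of_dvd_of_dvd (one_sub_pow_dvd_of_gcd_eq hm cycMat_pow_card hgcd.symm)
      (one_sub_pow_dvd_of_gcd_eq hm cycMat_pow_card hgcd)
  have hker := hsub.trans (ker_foldMat hdm).symm
  have hπ := foldMat_mulVecLin_surjective (Nat.le_of_dvd hm hdm)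
  refine ⟨range_mulVecLin_eq_of_dvd_of_dvd
      (one_add_pow_dvd_of_gcd_eq hm cycMat_pow_card hgcd.symm)
      (one_add_pow_dvd_of_gcd_eq hm cycMat_pow_card hgcd), hsub,
    ⟨(cokerFromColsEquiv _ hπ hker (map_foldMat_range_aeval_cycMat hdm f)).toAddEquiv⟩,
    ⟨(cokerFromColsEquiv _ hπ hker ?_).toAddEquiv⟩⟩
  rw [range_mulVecLin_fromCols, range_mulVecLin_fromCols, Submodule.map_sup,
    map_foldMat_range_aeval_cycMat hdm, map_foldMat_range_aeval_cycMat hdm]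
end

section
/- Let m, l ≥ 1 be integers. Then Coker (l·s_m(−X_m)) ≅ ℤ^{m−1} ⊕ ℤ/lℤ, and Coker [s_m(−X_m) l·1_m] ≅ (ℤ/lℤ)^{m−1}. -/
open Matrix Polynomial

/-!
Since `s_m(-X) = 1 + X + ⋯ + X^(m-1)` and the powers `X_m^k`, `k < m`, are the permutation
matrices of the `m` rotations, `s_m(-X_m)` is the all-ones matrix `J`. Hence the image of `l·J` is
`lℤ·(1,…,1)` and that of `[J  l·1]` is `ℤ·(1,…,1) + lℤ^m`. Writing `m = n + 1`, these are the
kernels of the surjections `x ↦ ((x_i - x_m)_{i ≤ n}, x_m mod l)` onto `ℤ^n × ℤ/lℤ` and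
`x ↦ (x_i - x_m mod l)_{i ≤ n}` onto `(ℤ/lℤ)^n`.
-/

lemma cycMat_pow_apply (m k : ℕ) (i j : Fin m) :
    (cycMat m ^ k) i j = if ((j : ℕ) + k) % m = (i : ℕ) then 1 else 0 := by
  induction k generalizing i with
  | zero => simp [Matrix.one_apply, Nat.mod_eq_of_lt j.isLt, Fin.ext_iff, eq_comm]
  | succ k ih =>
    have hjk : (((j : ℕ) + k) % m + 1) % m = ((j : ℕ) + (k + 1)) % m := by
      rw [Nat.mod_add_mod, Nat.add_assoc]
    rw [pow_succ', Matrix.mul_apply,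
      Finset.sum_eq_single (⟨((j : ℕ) + k) % m, Nat.mod_lt _ i.pos⟩ : Fin m)]
    · rw [ih, if_pos rfl, mul_one, cycMat, of_apply, hjk]
    · intro b _ hb
      rw [ih, if_neg fun h => hb (Fin.ext h.symm), mul_zero]
    · simp

lemma sMat_neg {n : Type} [Fintype n] [DecidableEq n] (p : ℕ) (A : Matrix n n ℤ) :
    sMat p (-A) = ∑ k ∈ Finset.range p, A ^ k := by
  refine Finset.sum_congr rfl fun k _ => ?_
  rw [← neg_one_smul ℤ A, _root_.smul_pow, smul_smul, ← mul_pow]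
  simp

lemma sMat_neg_cycMat (m : ℕ) : sMat m (-(cycMat m)) = of fun _ _ => 1 := by
  ext i j
  have : NeZero m := ⟨i.pos.ne'⟩
  have hshift (k : Fin m) : ((j : ℕ) + k) % m = i ↔ k = i - j := by
    rw [eq_sub_iff_add_eq', Fin.ext_iff, Fin.val_add]
  rw [sMat_neg, Matrix.sum_apply, Finset.sum_range]
  simp only [cycMat_pow_apply, hshift, Finset.sum_ite_eq', Finset.mem_univ, if_true, of_apply]

section AllOnes

variable {ι κ : Type} [Fintype κ]

lemma allOnes_mulVec (v : κ → ℤ) :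
    (of fun (_ : ι) (_ : κ) => (1 : ℤ)) *ᵥ v = fun _ => ∑ j, v j :=
  funext fun _ => one_dotProduct v

variable [Fintype ι] [DecidableEq ι]

lemma allOnes_mulVec_single (i₀ : ι) (c : ℤ) :
    (of fun (_ : ι) (_ : ι) => (1 : ℤ)) *ᵥ Pi.single i₀ c = fun _ => c := by
  rw [allOnes_mulVec, Finset.sum_pi_single']
  simp

variable [Nonempty ι]

lemma mem_range_smul_allOnes_mulVecLin (l : ℤ) (x : ι → ℤ) :
    x ∈ LinearMap.range (l • of fun (_ : ι) (_ : ι) => (1 : ℤ)).mulVecLin ↔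
      ∃ c : ℤ, x = fun _ => l * c := by
  simp only [LinearMap.mem_range, mulVecLin_apply, smul_mulVec]
  constructor
  · rintro ⟨v, rfl⟩
    exact ⟨∑ j, v j, by rw [allOnes_mulVec]; rfl⟩
  · rintro ⟨c, rfl⟩
    obtain ⟨i₀⟩ := ‹Nonempty ι›
    exact ⟨Pi.single i₀ c, by rw [allOnes_mulVec_single]; rfl⟩

lemma mem_range_fromCols_allOnes_mulVecLin (l : ℤ) (x : ι → ℤ) :
    x ∈ LinearMap.range
        (fromCols (of fun (_ : ι) (_ : ι) => (1 : ℤ)) (l • (1 : Matrix ι ι ℤ))).mulVecLin ↔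
      ∃ (c : ℤ) (w : ι → ℤ), x = fun i => c + l * w i := by
  constructor
  · rintro ⟨v, rfl⟩
    refine ⟨∑ j, v (Sum.inl j), v ∘ Sum.inr, ?_⟩
    rw [mulVecLin_apply, ← Sum.elim_comp_inl_inr v, fromCols_mulVec_sumElim, smul_mulVec,
      one_mulVec, allOnes_mulVec]
    rfl
  · rintro ⟨c, w, rfl⟩
    obtain ⟨i₀⟩ := ‹Nonempty ι›
    refine ⟨Sum.elim (Pi.single i₀ c) w, ?_⟩
    rw [mulVecLin_apply, fromCols_mulVec_sumElim, smul_mulVec, one_mulVec,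
      allOnes_mulVec_single]
    rfl

end AllOnes

section DiffLast

variable (n l : ℕ)

def diffLast : (Fin (n + 1) → ℤ) →ₗ[ℤ] (Fin n → ℤ) :=
  LinearMap.pi fun i : Fin n =>
    LinearMap.proj (R := ℤ) (φ := fun _ : Fin (n + 1) => ℤ) i.castSucc -
      LinearMap.proj (Fin.last n)

variable {n}

@[simp]
lemma diffLast_apply (x : Fin (n + 1) → ℤ) (i : Fin n) :
    diffLast n x i = x i.castSucc - x (Fin.last n) := rfl

lemma diffLast_eq_zero_iff (x : Fin (n + 1) → ℤ) :
    diffLast n x = 0 ↔ x = fun _ => x (Fin.last n) := by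
  simp only [funext_iff, Pi.zero_apply, diffLast_apply, sub_eq_zero]
  exact ⟨fun h => Fin.lastCases rfl h, fun h i => h i.castSucc⟩

variable (n)

def diffLastProdLastMod : (Fin (n + 1) → ℤ) →ₗ[ℤ] (Fin n → ℤ) × ZMod l :=
  (diffLast n).prod (Algebra.linearMap ℤ (ZMod l) ∘ₗ LinearMap.proj (Fin.last n))

def diffLastMod : (Fin (n + 1) → ℤ) →ₗ[ℤ] (Fin n → ZMod l) :=
  LinearMap.compLeft (Algebra.linearMap ℤ (ZMod l)) (Fin n) ∘ₗ diffLast n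

variable {n l}

lemma mem_ker_diffLastProdLastMod (x : Fin (n + 1) → ℤ) :
    x ∈ LinearMap.ker (diffLastProdLastMod n l) ↔ ∃ c : ℤ, x = fun _ => l * c := by
  simp only [LinearMap.mem_ker, diffLastProdLastMod, LinearMap.prod_apply, Function.prod,
    Prod.mk_eq_zero, LinearMap.comp_apply, LinearMap.proj_apply, Algebra.linearMap_apply,
    algebraMap_int_eq, eq_intCast, CharP.intCast_eq_zero_iff (ZMod l) l, diffLast_eq_zero_iff]
  constructor
  · rintro ⟨hx, c, hc⟩
    exact ⟨c, hx.trans (funext fun _ => hc)⟩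
  · rintro ⟨c, rfl⟩
    exact ⟨rfl, c, rfl⟩

lemma mem_ker_diffLastMod (x : Fin (n + 1) → ℤ) :
    x ∈ LinearMap.ker (diffLastMod n l) ↔
      ∃ (c : ℤ) (w : Fin (n + 1) → ℤ), x = fun i => c + l * w i := by
  simp only [LinearMap.mem_ker, diffLastMod, LinearMap.comp_apply, funext_iff,
    LinearMap.compLeft_apply, Pi.zero_apply, Function.comp_apply, Algebra.linearMap_apply,
    algebraMap_int_eq, eq_intCast, CharP.intCast_eq_zero_iff (ZMod l) l, diffLast_apply]
  constructor
  · intro h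
    have hdvd (i : Fin (n + 1)) : (l : ℤ) ∣ x i - x (Fin.last n) := by
      induction i using Fin.lastCases with
      | last => simp
      | cast i => exact h i
    exact ⟨x (Fin.last n), fun i => (x i - x (Fin.last n)) / l,
      fun i => by rw [Int.mul_ediv_cancel' (hdvd i)]; ring⟩
  · rintro ⟨c, w, hx⟩ i
    exact ⟨w i.castSucc - w (Fin.last n), by rw [hx, hx]; ring⟩

lemma diffLastProdLastMod_surjective : Function.Surjective (diffLastProdLastMod n l) := by
  rintro ⟨y, z⟩
  obtain ⟨a, rfl⟩ := ZMod.intCast_surjective z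
  refine ⟨Fin.snoc (fun i => y i + a) a, ?_⟩
  ext i <;> simp [diffLastProdLastMod]

lemma diffLastMod_surjective : Function.Surjective (diffLastMod n l) := by
  intro y
  choose a ha using fun i => ZMod.intCast_surjective (y i)
  refine ⟨Fin.snoc a 0, funext fun i => ?_⟩
  simp [diffLastMod, ha]

end DiffLast

lemma nonempty_coker_addEquiv {ι κ : Type} [Fintype ι] [Fintype κ] {M : Type*} [AddCommGroup M]
    (A : Matrix ι κ ℤ) (f : (ι → ℤ) →ₗ[ℤ] M) (hf : Function.Surjective f)
    (hAf : LinearMap.range A.mulVecLin = LinearMap.ker f) : Nonempty (coker A ≃+ M) :=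
  ⟨((Submodule.quotEquivOfEq _ _ hAf).trans (f.quotKerEquivOfSurjective hf)).toAddEquiv⟩

theorem stmt_7_general (m l : ℕ) (hm : 1 ≤ m) :
    Nonempty (coker ((l : ℤ) • sMat m (-(cycMat m))) ≃+ ((Fin (m - 1) → ℤ) × ZMod l)) ∧
    Nonempty (coker (Matrix.fromCols (sMat m (-(cycMat m)))
      ((l : ℤ) • (1 : Matrix (Fin m) (Fin m) ℤ))) ≃+ (Fin (m - 1) → ZMod l)) := by
  obtain ⟨n, rfl⟩ := Nat.exists_eq_add_of_le' hm
  rw [Nat.add_sub_cancel, sMat_neg_cycMat]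
  refine ⟨nonempty_coker_addEquiv _ _ diffLastProdLastMod_surjective ?_,
    nonempty_coker_addEquiv _ _ diffLastMod_surjective ?_⟩
  · ext x
    rw [mem_range_smul_allOnes_mulVecLin, mem_ker_diffLastProdLastMod]
  · ext x
    rw [mem_range_fromCols_allOnes_mulVecLin, mem_ker_diffLastMod]

theorem stmt_7 (m l : ℕ) (hm : 1 ≤ m) (hl : 1 ≤ l) :
    Nonempty (coker ((l : ℤ) • sMat m (-(cycMat m))) ≃+ ((Fin (m - 1) → ℤ) × ZMod l)) ∧
    Nonempty (coker (Matrix.fromCols (sMat m (-(cycMat m)))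
      ((l : ℤ) • (1 : Matrix (Fin m) (Fin m) ℤ))) ≃+ (Fin (m - 1) → ZMod l)) :=
  stmt_7_general m l hm
end
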